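/- Let E be a 3-dimensional real inner product space. Let t, n₁, n₂ ∈ E be unit vectors such that ⟨t, n₁⟩ = 0, ⟨t, n₂⟩ = 0, and ⟨n₁, n₂⟩² < 1 (i.e. n₁ and n₂ are not parallel). Then every vector v ∈ E with ⟨v, t⟩ = 0 satisfies ‖v‖ ≤ (|⟨v, n₁⟩| + |⟨v, n₂⟩|) / √(1 − ⟨n₁, n₂⟩²). -/

import Mathlib

open RealInnerProductSpace Submodule

/-!
The vectors `n₁, n₂` are independent and orthogonal to `t`, so in dimension three they span
`tᗮ ∋ v`. For `v` in the span of `n₁, n₂`, the Gram determinant gives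
`‖v‖² (1 - c²) = x² + y² - 2cxy` with `c = ⟪n₁, n₂⟫`, `x = ⟪v, n₁⟫`, `y = ⟪v, n₂⟫`,
and since `|c| ≤ 1` the right-hand side is at most `(|x| + |y|)²`.
-/

section GramDeterminant

variable {E : Type*} [NormedAddCommGroup E] [InnerProductSpace ℝ E]

theorem linearIndependent_pair_of_inner_sq_lt {n₁ n₂ : E}
    (h : ⟪n₁, n₂⟫ ^ 2 < ‖n₁‖ ^ 2 * ‖n₂‖ ^ 2) : LinearIndependent ℝ ![n₁, n₂] := by
  rw [LinearIndependent.pair_iff]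
  intro a b hab
  have h₁ : a * ‖n₁‖ ^ 2 + b * ⟪n₁, n₂⟫ = 0 := by
    simpa [inner_add_left, real_inner_smul_left, real_inner_comm n₁ n₂] using
      congrArg (⟪·, n₁⟫) hab
  have h₂ : a * ⟪n₁, n₂⟫ + b * ‖n₂‖ ^ 2 = 0 := by
    simpa [inner_add_left, real_inner_smul_left] using congrArg (⟪·, n₂⟫) hab
  have hgram : ‖n₁‖ ^ 2 * ‖n₂‖ ^ 2 - ⟪n₁, n₂⟫ ^ 2 ≠ 0 := by linarith
  constructor
  · exact (mul_eq_zero.1 (by linear_combination ‖n₂‖ ^ 2 * h₁ - ⟪n₁, n₂⟫ * h₂ :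
      a * (‖n₁‖ ^ 2 * ‖n₂‖ ^ 2 - ⟪n₁, n₂⟫ ^ 2) = 0)).resolve_right hgram
  · exact (mul_eq_zero.1 (by linear_combination ‖n₁‖ ^ 2 * h₂ - ⟪n₁, n₂⟫ * h₁ :
      b * (‖n₁‖ ^ 2 * ‖n₂‖ ^ 2 - ⟪n₁, n₂⟫ ^ 2) = 0)).resolve_right hgram

theorem span_pair_eq_orthogonal_span_singleton (hdim : Module.finrank ℝ E = 3)
    {t n₁ n₂ : E} (ht : t ≠ 0) (htn₁ : ⟪t, n₁⟫ = 0) (htn₂ : ⟪t, n₂⟫ = 0)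
    (hind : LinearIndependent ℝ ![n₁, n₂]) : span ℝ {n₁, n₂} = (ℝ ∙ t)ᗮ := by
  have : Fact (Module.finrank ℝ E = 2 + 1) := ⟨hdim⟩
  have : FiniteDimensional ℝ E := .of_finrank_eq_succ hdim
  apply eq_of_le_of_finrank_eq
  · rw [span_le, Set.insert_subset_iff, Set.singleton_subset_iff]
    exact ⟨mem_orthogonal_singleton_iff_inner_right.2 htn₁,
      mem_orthogonal_singleton_iff_inner_right.2 htn₂⟩
  · rw [finrank_orthogonal_span_singleton (n := 2) ht, ← Matrix.range_cons_cons_empty,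
      finrank_span_eq_card hind, Fintype.card_fin]

theorem norm_sq_mul_gram_eq_of_mem_span_pair {n₁ n₂ v : E} (hv : v ∈ span ℝ {n₁, n₂}) :
    ‖v‖ ^ 2 * (‖n₁‖ ^ 2 * ‖n₂‖ ^ 2 - ⟪n₁, n₂⟫ ^ 2) =
      ‖n₂‖ ^ 2 * ⟪v, n₁⟫ ^ 2 + ‖n₁‖ ^ 2 * ⟪v, n₂⟫ ^ 2
        - 2 * ⟪n₁, n₂⟫ * ⟪v, n₁⟫ * ⟪v, n₂⟫ := by
  obtain ⟨a, b, rfl⟩ := mem_span_pair.1 hv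
  simp only [← real_inner_self_eq_norm_sq, inner_add_left, inner_add_right,
    real_inner_smul_left, real_inner_smul_right, real_inner_comm n₁ n₂]
  ring

theorem sq_add_sq_sub_mul_le_sq_abs_add_abs {c : ℝ} (hc : |c| ≤ 1) (x y : ℝ) :
    x ^ 2 + y ^ 2 - 2 * c * x * y ≤ (|x| + |y|) ^ 2 := by
  have hcxy : -(c * (x * y)) ≤ |x| * |y| := by
    calc -(c * (x * y)) ≤ |c| * (|x| * |y|) := by
          rw [← abs_mul, ← abs_mul]; exact neg_le_abs _
      _ ≤ |x| * |y| := mul_le_of_le_one_left (by positivity) hc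
  nlinarith [sq_abs x, sq_abs y]

end GramDeterminant

/-- Linear-algebra core of Ilmanen's intersection-curvature lemma. -/
theorem norm_le_of_inner_orthogonal_three_dim
    {E : Type*} [NormedAddCommGroup E] [InnerProductSpace ℝ E]
    (hdim : Module.finrank ℝ E = 3)
    (t n₁ n₂ : E) (ht : ‖t‖ = 1) (hn₁ : ‖n₁‖ = 1) (hn₂ : ‖n₂‖ = 1)
    (htn₁ : ⟪t, n₁⟫ = 0) (htn₂ : ⟪t, n₂⟫ = 0)
    (hpar : ⟪n₁, n₂⟫ ^ 2 < 1) :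
    ∀ v : E, ⟪v, t⟫ = 0 →
      ‖v‖ ≤ (|⟪v, n₁⟫| + |⟪v, n₂⟫|) / Real.sqrt (1 - ⟪n₁, n₂⟫ ^ 2) := by
  intro v hvt
  have hind : LinearIndependent ℝ ![n₁, n₂] :=
    linearIndependent_pair_of_inner_sq_lt (by simpa [hn₁, hn₂] using hpar)
  have hv : v ∈ span ℝ {n₁, n₂} := by
    rw [span_pair_eq_orthogonal_span_singleton hdim (norm_ne_zero_iff.1 (by simp [ht]))
      htn₁ htn₂ hind]
    exact mem_orthogonal_singleton_iff_inner_left.2 hvt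
  have hgram := norm_sq_mul_gram_eq_of_mem_span_pair hv
  simp only [hn₁, hn₂, one_pow, one_mul, mul_one] at hgram
  have hc : |⟪n₁, n₂⟫| ≤ 1 := (sq_le_one_iff_abs_le_one _).1 hpar.le
  have hs : 0 < 1 - ⟪n₁, n₂⟫ ^ 2 := by linarith
  rw [le_div_iff₀ (Real.sqrt_pos.2 hs)]
  refine (pow_le_pow_iff_left₀ (by positivity) (by positivity) two_ne_zero).1 ?_
  calc (‖v‖ * Real.sqrt (1 - ⟪n₁, n₂⟫ ^ 2)) ^ 2 = ‖v‖ ^ 2 * (1 - ⟪n₁, n₂⟫ ^ 2) := by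
        rw [mul_pow, Real.sq_sqrt hs.le]
    _ ≤ (|⟪v, n₁⟫| + |⟪v, n₂⟫|) ^ 2 := hgram ▸ sq_add_sq_sub_mul_le_sq_abs_add_abs hc _ _
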